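/- arXiv:2004.02180 — 2 statements merged into one kernel-verified Lean document; each statement's English description precedes it below -/
import Mathlib

section
/- Let n ≤ m and let {A,B} be an (m,p,n)-GMP with GSVD as in the context, with generalized singular values (αᵢ, βᵢ). Then for every 1 ≤ i ≤ ⌊n/2⌋ the following two model formulations hold simultaneously: (i) αᵢ² = max_{Φ ∈ 𝕌_m} Re tr(Aᴴ Φᴴ Q_i Φ A (AᴴA + BᴴB)^{-1}) − max_{Φ ∈ 𝕌_m} Re tr(Aᴴ Φᴴ Q_{i-1} Φ A (AᴴA + BᴴB)^{-1}); and (ii) αᵢ = max_{Π₁ ∈ 𝕌_m, Π₂ ∈ 𝕌_n} |tr(Π₁ A (AᴴA + BᴴB)^{-1/2} Π₂ 𝒢_i)| − max_{Π₁ ∈ 𝕌_m, Π₂ ∈ 𝕌_n} |tr(Π₁ A (AᴴA + BᴴB)^{-1/2} Π₂ 𝒢_{i-1})|. -/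
/-!
After the GSVD change of variables both objective functions become weighted sums
`∑ₗ αₗᵏ wₗ` (`k = 2` for the first, `k = 1` for the second), with weights `0 ≤ wₗ ≤ 1` and
`∑ₗ wₗ ≤ r`: in the first they are partial column sums of `|V_{kl}|²` for a unitary `V`, in the
second (after `|xy| ≤ (|x|² + |y|²)/2`) averages of partial row and column sums of two unitaries.
Since `α` is nonnegative and decreasing, such a sum is at most `α₀ᵏ + ⋯ + α_{r-1}ᵏ`, and this
value is attained by the unitaries that undo `U` and `R M^{-1/2}` (the latter is unitary because
`RᴴR = M`). The two maxima for `r = i + 1` and `r = i` thus differ by `αᵢ²`, resp. `αᵢ`.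
-/

open Matrix BigOperators Finset
open scoped ComplexOrder

theorem Fin.card_filter_val_lt_of_le {n r : ℕ} (hr : r ≤ n) :
    #({l | (l : ℕ) < r} : Finset (Fin n)) = r := by
  rw [Fin.card_filter_val_lt, min_eq_right hr]

theorem Fin.filter_val_lt_add_one {n : ℕ} (i : Fin n) :
    ({l | (l : ℕ) < i + 1} : Finset (Fin n)) =
      insert i ({l | (l : ℕ) < i} : Finset (Fin n)) := by
  ext l
  simp only [mem_filter, mem_univ, true_and, mem_insert, Fin.ext_iff]
  omega

theorem sum_mul_le_sum_filter_lt_of_antitone {n r : ℕ} {α w : Fin n → ℝ} (hα0 : ∀ l, 0 ≤ α l)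
    (hα : Antitone α) (hw0 : ∀ l, 0 ≤ w l) (hw1 : ∀ l, w l ≤ 1) (hr : r ≤ n)
    (hw : ∑ l, w l ≤ r) :
    ∑ l, α l * w l ≤ ∑ l ∈ ({l | (l : ℕ) < r} : Finset (Fin n)), α l := by
  rcases Nat.eq_zero_or_pos n with rfl | hn
  · simp
  -- `c` separates the first `r` values of `α` from the others (for `r = 0`, `r - 1 = 0`).
  set c := α ⟨r - 1, by omega⟩
  have hc : 0 ≤ c := hα0 _
  have key : ∀ l, α l * w l ≤ (if (l : ℕ) < r then α l else 0) +
      c * (w l - if (l : ℕ) < r then 1 else 0) := by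
    intro l
    split_ifs with hl
    · have : c ≤ α l := hα (Fin.le_def.mpr (Nat.le_sub_one_of_lt hl))
      nlinarith [hw1 l]
    · have : α l ≤ c := hα (Fin.mk_le_of_le_val (by omega))
      nlinarith [hw0 l]
  have hcard : ∑ l : Fin n, (if (l : ℕ) < r then (1 : ℝ) else 0) = r := by
    rw [← sum_filter, sum_const, Fin.card_filter_val_lt_of_le hr, nsmul_one]
  calc ∑ l, α l * w l
      ≤ ∑ l : Fin n,
          ((if (l : ℕ) < r then α l else 0) + c * (w l - if (l : ℕ) < r then 1 else 0)) :=
        sum_le_sum fun l _ => key l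
    _ = ∑ l ∈ ({l | (l : ℕ) < r} : Finset (Fin n)), α l + c * (∑ l, w l - r) := by
        rw [sum_add_distrib, ← mul_sum, sum_sub_distrib, hcard, sum_filter]
    _ ≤ ∑ l ∈ ({l | (l : ℕ) < r} : Finset (Fin n)), α l := by nlinarith

theorem norm_sum_mul_le_half_sum_sq {ι : Type*} (s : Finset ι) (x y : ι → ℂ) :
    ‖∑ a ∈ s, x a * y a‖ ≤ (∑ a ∈ s, ‖x a‖ ^ 2 + ∑ a ∈ s, ‖y a‖ ^ 2) / 2 := by
  rw [← sum_add_distrib, sum_div]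
  refine (norm_sum_le _ _).trans (sum_le_sum fun a _ => ?_)
  rw [norm_mul]
  linarith [two_mul_le_add_sq ‖x a‖ ‖y a‖]

namespace Matrix

section Unitary

variable {ι 𝕜 : Type*} [Fintype ι] [DecidableEq ι] [RCLike 𝕜] {V : Matrix ι ι 𝕜}

theorem sum_norm_sq_row_eq_one (hV : V ∈ unitaryGroup ι 𝕜) (i : ι) :
    ∑ j, ‖V i j‖ ^ 2 = 1 := by
  have h := congr_fun₂ (mem_unitaryGroup_iff.mp hV) i i
  simp only [star_eq_conjTranspose, mul_apply, conjTranspose_apply, ← starRingEnd_apply,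
    RCLike.mul_conj, one_apply_eq] at h
  exact_mod_cast h

theorem sum_norm_sq_col_eq_one (hV : V ∈ unitaryGroup ι 𝕜) (j : ι) :
    ∑ i, ‖V i j‖ ^ 2 = 1 := by
  simpa using sum_norm_sq_row_eq_one (Unitary.star_mem hV) j

theorem sum_norm_sq_row_le_one (hV : V ∈ unitaryGroup ι 𝕜) (i : ι) (t : Finset ι) :
    ∑ j ∈ t, ‖V i j‖ ^ 2 ≤ 1 :=
  sum_norm_sq_row_eq_one hV i ▸
    sum_le_sum_of_subset_of_nonneg (subset_univ t) fun _ _ _ => sq_nonneg _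

theorem sum_norm_sq_col_le_one (hV : V ∈ unitaryGroup ι 𝕜) (s : Finset ι) (j : ι) :
    ∑ i ∈ s, ‖V i j‖ ^ 2 ≤ 1 :=
  sum_norm_sq_col_eq_one hV j ▸
    sum_le_sum_of_subset_of_nonneg (subset_univ s) fun _ _ _ => sq_nonneg _

theorem sum_sum_norm_sq_le_card_left (hV : V ∈ unitaryGroup ι 𝕜) (s t : Finset ι) :
    ∑ i ∈ s, ∑ j ∈ t, ‖V i j‖ ^ 2 ≤ #s := by
  simpa using sum_le_sum fun i (_ : i ∈ s) => sum_norm_sq_row_le_one hV i t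

theorem sum_sum_norm_sq_le_card_right (hV : V ∈ unitaryGroup ι 𝕜) (s t : Finset ι) :
    ∑ i ∈ s, ∑ j ∈ t, ‖V i j‖ ^ 2 ≤ #t := by
  rw [sum_comm]
  simpa using sum_le_sum fun j (_ : j ∈ t) => sum_norm_sq_col_le_one hV s j

end Unitary

theorem mul_inv_mem_unitaryGroup_of_conjTranspose_mul_self {K ι : Type*} [CommRing K]
    [StarRing K] [Fintype ι] [DecidableEq ι] {R S : Matrix ι ι K} (hS : S.IsHermitian)
    (hSdet : IsUnit S.det) (hRS : Rᴴ * R = S * S) : R * S⁻¹ ∈ unitaryGroup ι K := by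
  rw [mem_unitaryGroup_iff', star_eq_conjTranspose, conjTranspose_mul,
    conjTranspose_nonsing_inv, hS.eq]
  calc S⁻¹ * Rᴴ * (R * S⁻¹) = S⁻¹ * (Rᴴ * R) * S⁻¹ := by simp only [Matrix.mul_assoc]
    _ = 1 := by
      rw [hRS, ← Matrix.mul_assoc, nonsing_inv_mul _ hSdet, Matrix.one_mul,
        mul_nonsing_inv _ hSdet]

theorem trace_conjTranspose_mul_mul_inv {o p : Type*} [Fintype o] [Fintype p] [DecidableEq p]
    (X : Matrix o p ℂ) (W : Matrix o o ℂ) {R : Matrix p p ℂ} (hR : IsUnit R.det) :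
    trace ((X * R)ᴴ * W * (X * R) * (Rᴴ * R)⁻¹) = trace (Xᴴ * W * X) := by
  have hRH : IsUnit Rᴴ.det := by rwa [det_conjTranspose, isUnit_star]
  calc trace ((X * R)ᴴ * W * (X * R) * (Rᴴ * R)⁻¹)
      = trace (Rᴴ * (Xᴴ * W * X) * (R * R⁻¹) * Rᴴ⁻¹) := by
        simp only [conjTranspose_mul, mul_inv_rev, Matrix.mul_assoc]
    _ = trace (Xᴴ * W * X) := by
        rw [mul_nonsing_inv R hR, Matrix.mul_one, trace_mul_cycle, nonsing_inv_mul _ hRH,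
          Matrix.one_mul]

variable {m n : ℕ}

-- `rectDiagonal m α`, `headProj m r` and `headSelect n m r` are the paper's `Σ_A`, `Q_r` and `𝒢_r`.
def rectDiagonal (m : ℕ) (α : Fin n → ℝ) : Matrix (Fin m) (Fin n) ℂ :=
  of fun k l => if (k : ℕ) = l then (α l : ℂ) else 0

def headProj (m r : ℕ) : Matrix (Fin m) (Fin m) ℂ :=
  diagonal fun k => if (k : ℕ) < r then 1 else 0

def headSelect (n m r : ℕ) : Matrix (Fin n) (Fin m) ℂ :=
  of fun l k => if (l : ℕ) = k ∧ (l : ℕ) < r then 1 else 0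

theorem rectDiagonal_apply (hnm : n ≤ m) (α : Fin n → ℝ) (k : Fin m) (l : Fin n) :
    rectDiagonal m α k l = if k = Fin.castLE hnm l then (α l : ℂ) else 0 := by
  simp [rectDiagonal, Fin.ext_iff]

theorem headSelect_apply (hnm : n ≤ m) (r : ℕ) (l : Fin n) (k : Fin m) :
    headSelect n m r l k = if k = Fin.castLE hnm l then (if (l : ℕ) < r then 1 else 0) else 0 := by
  simp only [headSelect, of_apply, Fin.ext_iff, Fin.val_castLE, eq_comm (a := (l : ℕ))]
  split_ifs <;> simp_all

theorem trace_mul_rectDiagonal (hnm : n ≤ m) (X : Matrix (Fin n) (Fin m) ℂ) (α : Fin n → ℝ) :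
    trace (X * rectDiagonal m α) = ∑ l, (α l : ℂ) * X l (Fin.castLE hnm l) := by
  simp only [trace, diag_apply, mul_apply, rectDiagonal_apply hnm, mul_ite, mul_zero,
    sum_ite_eq', mem_univ, if_true, mul_comm]

theorem conjTranspose_rectDiagonal_mul_apply {o : Type*} (hnm : n ≤ m) (α : Fin n → ℝ)
    (W : Matrix (Fin m) o ℂ) (l : Fin n) (j : o) :
    ((rectDiagonal m α)ᴴ * W) l j = α l * W (Fin.castLE hnm l) j := by
  simp [mul_apply, rectDiagonal_apply hnm, apply_ite (starRingEnd ℂ), ite_mul]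

theorem conjTranspose_rectDiagonal_mul_self (hnm : n ≤ m) (α : Fin n → ℝ) :
    (rectDiagonal m α)ᴴ * rectDiagonal m α = diagonal fun l => (α l : ℂ) ^ 2 := by
  ext l l'
  rw [conjTranspose_rectDiagonal_mul_apply hnm, rectDiagonal_apply hnm, diagonal_apply]
  rcases eq_or_ne l l' with rfl | h <;> simp [*, sq]

theorem conjTranspose_mul_headProj_mul_apply_self (V : Matrix (Fin m) (Fin m) ℂ) (r : ℕ)
    (j : Fin m) :
    (Vᴴ * headProj m r * V) j j =
      ((∑ k ∈ ({k | (k : ℕ) < r} : Finset (Fin m)), ‖V k j‖ ^ 2 : ℝ) : ℂ) := by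
  rw [Matrix.mul_assoc, headProj, mul_apply, sum_filter, Complex.ofReal_sum]
  refine sum_congr rfl fun k _ => ?_
  rw [diagonal_mul, conjTranspose_apply]
  split_ifs <;> simp [Complex.conj_mul']

theorem mul_headSelect_mul_apply {o p : Type*} (hnm : n ≤ m) (X : Matrix o (Fin n) ℂ) (r : ℕ)
    (Y : Matrix (Fin m) p ℂ) (i : o) (j : p) :
    (X * headSelect n m r * Y) i j =
      ∑ a ∈ ({a | (a : ℕ) < r} : Finset (Fin n)), X i a * Y (Fin.castLE hnm a) j := by
  rw [Matrix.mul_assoc]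
  simp [mul_apply, headSelect_apply hnm, sum_filter, ite_mul]

theorem conjTranspose_mul_self_add_eq_of_gsvd {p : ℕ} (hnm : n ≤ m) {α : Fin n → ℝ}
    {U : Matrix (Fin m) (Fin m) ℂ} (hU : U ∈ unitaryGroup (Fin m) ℂ) {R : Matrix (Fin n) (Fin n) ℂ}
    {B : Matrix (Fin p) (Fin n) ℂ}
    (hBB : Bᴴ * B = Rᴴ * diagonal (fun l => ((1 - α l ^ 2 : ℝ) : ℂ)) * R) :
    (U * rectDiagonal m α * R)ᴴ * (U * rectDiagonal m α * R) + Bᴴ * B = Rᴴ * R := by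
  have hUU : Uᴴ * U = 1 := mem_unitaryGroup_iff'.mp hU
  calc (U * rectDiagonal m α * R)ᴴ * (U * rectDiagonal m α * R) + Bᴴ * B
      = Rᴴ * ((rectDiagonal m α)ᴴ * (Uᴴ * U) * rectDiagonal m α) * R + Bᴴ * B := by
        simp only [conjTranspose_mul, Matrix.mul_assoc]
    _ = Rᴴ * diagonal (fun l => (α l : ℂ) ^ 2 + ((1 - α l ^ 2 : ℝ) : ℂ)) * R := by
        rw [hUU, Matrix.mul_one, conjTranspose_rectDiagonal_mul_self hnm, hBB, ← Matrix.add_mul,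
          ← Matrix.mul_add, diagonal_add]
    _ = Rᴴ * R := by simp

theorem trace_conjTranspose_headProj_mul (hnm : n ≤ m) (V : Matrix (Fin m) (Fin m) ℂ)
    (α : Fin n → ℝ) (r : ℕ) :
    trace ((V * rectDiagonal m α)ᴴ * headProj m r * (V * rectDiagonal m α)) =
      ((∑ l, α l ^ 2 * ∑ k ∈ ({k | (k : ℕ) < r} : Finset (Fin m)),
        ‖V k (Fin.castLE hnm l)‖ ^ 2 : ℝ) : ℂ) := by
  have : (V * rectDiagonal m α)ᴴ * headProj m r * (V * rectDiagonal m α) =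
      (rectDiagonal m α)ᴴ * (Vᴴ * headProj m r * V) * rectDiagonal m α := by
    simp only [conjTranspose_mul, Matrix.mul_assoc]
  rw [this, trace_mul_rectDiagonal hnm]
  simp only [conjTranspose_rectDiagonal_mul_apply hnm, conjTranspose_mul_headProj_mul_apply_self]
  push_cast
  simp only [sq, mul_assoc]

theorem re_trace_conjTranspose_headProj_mul_le (hnm : n ≤ m) {α : Fin n → ℝ}
    (hα0 : ∀ l, 0 ≤ α l) (hα : Antitone α) {V : Matrix (Fin m) (Fin m) ℂ}
    (hV : V ∈ unitaryGroup (Fin m) ℂ) {r : ℕ} (hr : r ≤ n) :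
    (trace ((V * rectDiagonal m α)ᴴ * headProj m r * (V * rectDiagonal m α))).re ≤
      ∑ l ∈ ({l | (l : ℕ) < r} : Finset (Fin n)), α l ^ 2 := by
  set s : Finset (Fin m) := {k | (k : ℕ) < r}
  set c := Fin.castLEEmb hnm
  rw [trace_conjTranspose_headProj_mul hnm, Complex.ofReal_re]
  refine sum_mul_le_sum_filter_lt_of_antitone (fun l => sq_nonneg _)
    (fun a b h => pow_le_pow_left₀ (hα0 b) (hα h) 2) (fun l => by positivity)
    (fun l => sum_norm_sq_col_le_one hV s (c l)) hr ?_
  rw [sum_comm]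
  simpa [sum_map, s, c, Fin.card_filter_val_lt_of_le (hr.trans hnm)] using
    sum_sum_norm_sq_le_card_left hV s (univ.map c)

theorem trace_conjTranspose_rectDiagonal_headProj (hnm : n ≤ m) (α : Fin n → ℝ) (r : ℕ) :
    trace ((rectDiagonal m α)ᴴ * headProj m r * rectDiagonal m α) =
      ((∑ l ∈ ({l | (l : ℕ) < r} : Finset (Fin n)), α l ^ 2 : ℝ) : ℂ) := by
  simpa [one_apply, sum_filter, apply_ite] using trace_conjTranspose_headProj_mul hnm 1 α r

theorem iSup_re_trace_headProj (hnm : n ≤ m) {α : Fin n → ℝ} (hα0 : ∀ l, 0 ≤ α l)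
    (hα : Antitone α) {U : Matrix (Fin m) (Fin m) ℂ} (hU : U ∈ unitaryGroup (Fin m) ℂ)
    {R : Matrix (Fin n) (Fin n) ℂ} (hR : IsUnit R.det) {r : ℕ} (hr : r ≤ n) :
    ⨆ Φ : unitaryGroup (Fin m) ℂ,
      (trace ((U * rectDiagonal m α * R)ᴴ * (Φ : Matrix (Fin m) (Fin m) ℂ)ᴴ * headProj m r *
        (Φ : Matrix (Fin m) (Fin m) ℂ) * (U * rectDiagonal m α * R) * (Rᴴ * R)⁻¹)).re =
      ∑ l ∈ ({l | (l : ℕ) < r} : Finset (Fin n)), α l ^ 2 := by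
  have key (Φ : Matrix (Fin m) (Fin m) ℂ) :
      trace ((U * rectDiagonal m α * R)ᴴ * Φᴴ * headProj m r * Φ * (U * rectDiagonal m α * R) *
        (Rᴴ * R)⁻¹) =
      trace ((Φ * U * rectDiagonal m α)ᴴ * headProj m r * (Φ * U * rectDiagonal m α)) := by
    rw [← trace_conjTranspose_mul_mul_inv _ _ hR]
    simp only [conjTranspose_mul, Matrix.mul_assoc]
  refine ciSup_eq_of_forall_le_of_forall_lt_exists_gt (fun Φ => ?_) fun w hw =>
    ⟨⟨star U, Unitary.star_mem hU⟩, hw.trans_eq ?_⟩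
  · rw [key]
    exact re_trace_conjTranspose_headProj_mul_le hnm hα0 hα (mul_mem Φ.2 hU) hr
  · rw [key, mem_unitaryGroup_iff'.mp hU, Matrix.one_mul,
      trace_conjTranspose_rectDiagonal_headProj hnm, Complex.ofReal_re]

theorem trace_rectDiagonal_headSelect (hnm : n ≤ m) (P : Matrix (Fin m) (Fin m) ℂ)
    (α : Fin n → ℝ) (X : Matrix (Fin n) (Fin n) ℂ) (r : ℕ) :
    trace (P * rectDiagonal m α * X * headSelect n m r) =
      ∑ l, α l * ∑ a ∈ ({a | (a : ℕ) < r} : Finset (Fin n)),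
        X l a * P (Fin.castLE hnm a) (Fin.castLE hnm l) := by
  rw [Matrix.mul_assoc, trace_mul_comm, ← Matrix.mul_assoc, trace_mul_rectDiagonal hnm]
  simp only [mul_headSelect_mul_apply hnm]

theorem norm_trace_rectDiagonal_headSelect_le (hnm : n ≤ m) {α : Fin n → ℝ}
    (hα0 : ∀ l, 0 ≤ α l) (hα : Antitone α) {P : Matrix (Fin m) (Fin m) ℂ}
    (hP : P ∈ unitaryGroup (Fin m) ℂ) {X : Matrix (Fin n) (Fin n) ℂ}
    (hX : X ∈ unitaryGroup (Fin n) ℂ) {r : ℕ} (hr : r ≤ n) :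
    ‖trace (P * rectDiagonal m α * X * headSelect n m r)‖ ≤
      ∑ l ∈ ({l | (l : ℕ) < r} : Finset (Fin n)), α l := by
  set s : Finset (Fin n) := {l | (l : ℕ) < r}
  set c := Fin.castLEEmb hnm
  set p : Fin n → ℝ := fun l => ∑ a ∈ s, ‖X l a‖ ^ 2
  set q : Fin n → ℝ := fun l => ∑ a ∈ s, ‖P (c a) (c l)‖ ^ 2
  have hs : #s = r := Fin.card_filter_val_lt_of_le hr
  have hp1 (l : Fin n) : p l ≤ 1 := sum_norm_sq_row_le_one hX l s
  have hq1 (l : Fin n) : q l ≤ 1 := by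
    simpa [q, sum_map] using sum_norm_sq_col_le_one hP (s.map c) (c l)
  have hp : ∑ l, p l ≤ r := by
    simpa [p, hs] using sum_sum_norm_sq_le_card_right hX univ s
  have hq : ∑ l, q l ≤ r := by
    rw [sum_comm]
    simpa [sum_map, hs] using
      sum_sum_norm_sq_le_card_left hP (s.map c) (univ.map c)
  calc ‖trace (P * rectDiagonal m α * X * headSelect n m r)‖
      ≤ ∑ l, ‖(α l : ℂ) * ∑ a ∈ s, X l a * P (c a) (c l)‖ := by
        rw [trace_rectDiagonal_headSelect hnm]
        exact norm_sum_le _ _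
    _ ≤ ∑ l, α l * ((p l + q l) / 2) := by
        refine sum_le_sum fun l _ => ?_
        rw [norm_mul, Complex.norm_real, Real.norm_of_nonneg (hα0 l)]
        exact mul_le_mul_of_nonneg_left (norm_sum_mul_le_half_sum_sq _ _ _) (hα0 l)
    _ ≤ ∑ l ∈ s, α l := by
        refine sum_mul_le_sum_filter_lt_of_antitone hα0 hα (fun l => ?_) (fun l => ?_) hr ?_
        · positivity
        · linarith [hp1 l, hq1 l]
        · rw [← sum_div, sum_add_distrib]; linarith

theorem trace_rectDiagonal_mul_headSelect (hnm : n ≤ m) (α : Fin n → ℝ) (r : ℕ) :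
    trace (rectDiagonal m α * headSelect n m r) =
      ∑ l ∈ ({l | (l : ℕ) < r} : Finset (Fin n)), (α l : ℂ) := by
  simpa [one_apply, (Fin.castLE_injective hnm).eq_iff, sum_filter] using
    trace_rectDiagonal_headSelect hnm 1 α 1 r

theorem iSup_norm_trace_headSelect (hnm : n ≤ m) {α : Fin n → ℝ} (hα0 : ∀ l, 0 ≤ α l)
    (hα : Antitone α) {U : Matrix (Fin m) (Fin m) ℂ} (hU : U ∈ unitaryGroup (Fin m) ℂ)
    {R Y : Matrix (Fin n) (Fin n) ℂ} (hRY : R * Y ∈ unitaryGroup (Fin n) ℂ) {r : ℕ}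
    (hr : r ≤ n) :
    ⨆ W₁ : unitaryGroup (Fin m) ℂ, ⨆ W₂ : unitaryGroup (Fin n) ℂ,
      ‖trace ((W₁ : Matrix (Fin m) (Fin m) ℂ) * (U * rectDiagonal m α * R) * Y *
        (W₂ : Matrix (Fin n) (Fin n) ℂ) * headSelect n m r)‖ =
      ∑ l ∈ ({l | (l : ℕ) < r} : Finset (Fin n)), α l := by
  have key (W₁ : Matrix (Fin m) (Fin m) ℂ) (W₂ : Matrix (Fin n) (Fin n) ℂ) :
      W₁ * (U * rectDiagonal m α * R) * Y * W₂ * headSelect n m r =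
        W₁ * U * rectDiagonal m α * (R * Y * W₂) * headSelect n m r := by
    simp only [Matrix.mul_assoc]
  have hle (W₁ : unitaryGroup (Fin m) ℂ) (W₂ : unitaryGroup (Fin n) ℂ) :
      ‖trace ((W₁ : Matrix (Fin m) (Fin m) ℂ) * (U * rectDiagonal m α * R) * Y *
        (W₂ : Matrix (Fin n) (Fin n) ℂ) * headSelect n m r)‖ ≤
      ∑ l ∈ ({l | (l : ℕ) < r} : Finset (Fin n)), α l := by
    rw [key]
    exact norm_trace_rectDiagonal_headSelect_le hnm hα0 hα (mul_mem W₁.2 hU)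
      (mul_mem hRY W₂.2) hr
  have hmax : ‖trace (star U * (U * rectDiagonal m α * R) * Y * star (R * Y) *
      headSelect n m r)‖ = ∑ l ∈ ({l | (l : ℕ) < r} : Finset (Fin n)), α l := by
    rw [key, mem_unitaryGroup_iff'.mp hU, mem_unitaryGroup_iff.mp hRY, Matrix.one_mul,
      Matrix.mul_one, trace_rectDiagonal_mul_headSelect hnm, ← Complex.ofReal_sum,
      Complex.norm_real, Real.norm_of_nonneg (sum_nonneg fun l _ => hα0 l)]
  refine ciSup_eq_of_forall_le_of_forall_lt_exists_gt (fun W₁ => ciSup_le (hle W₁))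
    fun w hw => ⟨⟨star U, Unitary.star_mem hU⟩, hw.trans_le ?_⟩
  exact le_ciSup_of_le ⟨_, Set.forall_mem_range.mpr (hle _)⟩
    ⟨star (R * Y), Unitary.star_mem hRY⟩ hmax.ge

end Matrix

theorem stmt16_general
    {m p n : ℕ} (hnm : n ≤ m)
    (A : Matrix (Fin m) (Fin n) ℂ) (B : Matrix (Fin p) (Fin n) ℂ)
    (U : Matrix (Fin m) (Fin m) ℂ) (hU : U ∈ Matrix.unitaryGroup (Fin m) ℂ)
    (R : Matrix (Fin n) (Fin n) ℂ) (hR : IsUnit R.det)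
    (α : Fin n → ℝ)
    (hα0 : ∀ k, 0 ≤ α k) (hmono : Antitone α)
    (hA : A = U * (Matrix.of fun (k : Fin m) (l : Fin n) =>
        if (k : ℕ) = (l : ℕ) then Complex.ofReal (α l) else 0) * R)
    (hBB : Bᴴ * B = Rᴴ * Matrix.diagonal (fun l => Complex.ofReal (1 - α l ^ 2)) * R)
    (S : Matrix (Fin n) (Fin n) ℂ) (hS : S.PosDef)
    (hSsq : S * S = Aᴴ * A + Bᴴ * B)
    (i : Fin n) :
    (α i ^ 2 =
(⨆ Φ : Matrix.unitaryGroup (Fin m) ℂ,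
      (Matrix.trace (Aᴴ * (Φ : Matrix (Fin m) (Fin m) ℂ)ᴴ *
        Matrix.diagonal (fun k : Fin m => if (k : ℕ) ≤ (i : ℕ) then (1 : ℂ) else 0) *
        (Φ : Matrix (Fin m) (Fin m) ℂ) * A * (Aᴴ * A + Bᴴ * B)⁻¹)).re) -
(⨆ Φ : Matrix.unitaryGroup (Fin m) ℂ,
      (Matrix.trace (Aᴴ * (Φ : Matrix (Fin m) (Fin m) ℂ)ᴴ *
        Matrix.diagonal (fun k : Fin m => if (k : ℕ) < (i : ℕ) then (1 : ℂ) else 0) *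
        (Φ : Matrix (Fin m) (Fin m) ℂ) * A * (Aᴴ * A + Bᴴ * B)⁻¹)).re)) ∧
    (α i =
(⨆ W1 : Matrix.unitaryGroup (Fin m) ℂ, ⨆ W2 : Matrix.unitaryGroup (Fin n) ℂ,
      ‖(Matrix.trace ((W1 : Matrix (Fin m) (Fin m) ℂ) * A * S⁻¹ *
        (W2 : Matrix (Fin n) (Fin n) ℂ) *
        Matrix.of (fun (k : Fin n) (l : Fin m) =>
          if (k : ℕ) = (l : ℕ) ∧ (k : ℕ) ≤ (i : ℕ) then (1 : ℂ) else 0)))‖) -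
(⨆ W1 : Matrix.unitaryGroup (Fin m) ℂ, ⨆ W2 : Matrix.unitaryGroup (Fin n) ℂ,
      ‖(Matrix.trace ((W1 : Matrix (Fin m) (Fin m) ℂ) * A * S⁻¹ *
        (W2 : Matrix (Fin n) (Fin n) ℂ) *
        Matrix.of (fun (k : Fin n) (l : Fin m) =>
          if (k : ℕ) = (l : ℕ) ∧ (k : ℕ) < (i : ℕ) then (1 : ℂ) else 0)))‖)) := by
  replace hA : A = U * rectDiagonal m α * R := hA
  have hM : Aᴴ * A + Bᴴ * B = Rᴴ * R := hA ▸ conjTranspose_mul_self_add_eq_of_gsvd hnm hU hBB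
  have hRS : R * S⁻¹ ∈ unitaryGroup (Fin n) ℂ :=
    mul_inv_mem_unitaryGroup_of_conjTranspose_mul_self hS.isHermitian
      ((isUnit_iff_isUnit_det S).mp hS.isUnit) (hM ▸ hSsq).symm
  simp only [← Nat.lt_add_one_iff, ← headProj.eq_1, ← headSelect.eq_1]
  rw [hM, hA, iSup_re_trace_headProj hnm hα0 hmono hU hR i.isLt,
    iSup_re_trace_headProj hnm hα0 hmono hU hR i.isLt.le,
    iSup_norm_trace_headSelect hnm hα0 hmono hU hRS i.isLt,
    iSup_norm_trace_headSelect hnm hα0 hmono hU hRS i.isLt.le, Fin.filter_val_lt_add_one,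
    sum_insert (by simp), sum_insert (by simp)]
  constructor <;> ring

theorem stmt16
    {m p n : ℕ} (hnm : n ≤ m)
    (A : Matrix (Fin m) (Fin n) ℂ) (B : Matrix (Fin p) (Fin n) ℂ)
    (hrank : (Matrix.fromRows A B).rank = n)
    (U : Matrix (Fin m) (Fin m) ℂ) (hU : U ∈ Matrix.unitaryGroup (Fin m) ℂ)
    (R : Matrix (Fin n) (Fin n) ℂ) (hR : IsUnit R.det)
    (α : Fin n → ℝ)
    (hα0 : ∀ k, 0 ≤ α k) (hα1 : ∀ k, α k ≤ 1) (hmono : Antitone α)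
    (hA : A = U * (Matrix.of fun (k : Fin m) (l : Fin n) =>
        if (k : ℕ) = (l : ℕ) then Complex.ofReal (α l) else 0) * R)
    (hBB : Bᴴ * B = Rᴴ * Matrix.diagonal (fun l => Complex.ofReal (1 - α l ^ 2)) * R)
    (S : Matrix (Fin n) (Fin n) ℂ) (hS : S.PosDef)
    (hSsq : S * S = Aᴴ * A + Bᴴ * B)
    (i : Fin n) (hi : (i : ℕ) + 1 ≤ n / 2) :
    (α i ^ 2 =
(⨆ Φ : Matrix.unitaryGroup (Fin m) ℂ,
      (Matrix.trace (Aᴴ * (Φ : Matrix (Fin m) (Fin m) ℂ)ᴴ *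
        Matrix.diagonal (fun k : Fin m => if (k : ℕ) ≤ (i : ℕ) then (1 : ℂ) else 0) *
        (Φ : Matrix (Fin m) (Fin m) ℂ) * A * (Aᴴ * A + Bᴴ * B)⁻¹)).re) -
(⨆ Φ : Matrix.unitaryGroup (Fin m) ℂ,
      (Matrix.trace (Aᴴ * (Φ : Matrix (Fin m) (Fin m) ℂ)ᴴ *
        Matrix.diagonal (fun k : Fin m => if (k : ℕ) < (i : ℕ) then (1 : ℂ) else 0) *
        (Φ : Matrix (Fin m) (Fin m) ℂ) * A * (Aᴴ * A + Bᴴ * B)⁻¹)).re)) ∧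
    (α i =
(⨆ W1 : Matrix.unitaryGroup (Fin m) ℂ, ⨆ W2 : Matrix.unitaryGroup (Fin n) ℂ,
      ‖(Matrix.trace ((W1 : Matrix (Fin m) (Fin m) ℂ) * A * S⁻¹ *
        (W2 : Matrix (Fin n) (Fin n) ℂ) *
        Matrix.of (fun (k : Fin n) (l : Fin m) =>
          if (k : ℕ) = (l : ℕ) ∧ (k : ℕ) ≤ (i : ℕ) then (1 : ℂ) else 0)))‖) -
(⨆ W1 : Matrix.unitaryGroup (Fin m) ℂ, ⨆ W2 : Matrix.unitaryGroup (Fin n) ℂ,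
      ‖(Matrix.trace ((W1 : Matrix (Fin m) (Fin m) ℂ) * A * S⁻¹ *
        (W2 : Matrix (Fin n) (Fin n) ℂ) *
        Matrix.of (fun (k : Fin n) (l : Fin m) =>
          if (k : ℕ) = (l : ℕ) ∧ (k : ℕ) < (i : ℕ) then (1 : ℂ) else 0)))‖)) :=
  stmt16_general hnm A B U hU R hR α hα0 hmono hA hBB S hS hSsq i
end

section
/- Let n ≤ p and let {A,B} be an (m,p,n)-GMP with GSVD as in the context, with generalized singular values (αᵢ, βᵢ). Then for every ⌊n/2⌋+1 ≤ i ≤ n the following two model formulations hold simultaneously: (i) βᵢ² = max_{Φ ∈ 𝕌_p} Re tr(Bᴴ Φᴴ P_i Φ B (AᴴA + BᴴB)^{-1}) − max_{Φ ∈ 𝕌_p} Re tr(Bᴴ Φᴴ P_{i+1} Φ B (AᴴA + BᴴB)^{-1}); and (ii) βᵢ = max_{Ξ₁ ∈ 𝕌_p, Ξ₂ ∈ 𝕌_n} |tr(Ξ₁ B (AᴴA + BᴴB)^{-1/2} Ξ₂ ℋ_i)| − max_{Ξ₁ ∈ 𝕌_p, Ξ₂ ∈ 𝕌_n} |tr(Ξ₁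 B (AᴴA + BᴴB)^{-1/2} Ξ₂ ℋ_{i+1})|. -/
open Matrix BigOperators
open scoped ComplexOrder

/-!
Write `B = V Σ_B R`; then `AᴴA + BᴴB = RᴴR`, and `W = R (AᴴA + BᴴB)^{-1/2}` is unitary.
With `U = Φ V`, the trace in (i) is `∑_{k ≥ s} ∑_l |U_{kl}|² β_l²`; with `U₁ = Ξ₁ V` and
`U₂ = W Ξ₂`, the trace in (ii) is at most `∑_{k ≥ s} ∑_l |U₁_{kl}| |U₂_{lk}| β_l` (the indices of
`U` and `U₁` run over their last `n` rows and columns). Both coefficient matrices are doubly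
substochastic, so by the bathtub principle the sums are at most `∑_{l ≥ s} β_l²` and
`∑_{l ≥ s} β_l`, with equality at `U = U₁ = U₂ = 1`. Consecutive differences of these tail sums
are `β_i²` and `β_i`.
-/

open Finset

theorem ciSup_eq_of_forall_le_of_eq {ι α : Type*} [ConditionallyCompleteLattice α] {f : ι → α}
    {a : α} (hle : ∀ i, f i ≤ a) (i₀ : ι) (h₀ : f i₀ = a) : ⨆ i, f i = a :=
  IsGreatest.csSup_eq ⟨⟨i₀, h₀⟩, by rintro _ ⟨i, rfl⟩; exact hle i⟩

-- discrete bathtub principle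
theorem sum_mul_le_sum_of_threshold {ι : Type*} [Fintype ι] (T : Finset ι) {c d : ι → ℝ} {t : ℝ}
    (ht : 0 ≤ t) (hc0 : ∀ i, 0 ≤ c i) (hc1 : ∀ i, c i ≤ 1) (hc : ∑ i, c i ≤ #T)
    (hlow : ∀ i ∉ T, d i ≤ t) (hhigh : ∀ i ∈ T, t ≤ d i) :
    ∑ i, c i * d i ≤ ∑ i ∈ T, d i := by
  classical
  calc ∑ i, c i * d i ≤ ∑ i, (c i * t + if i ∈ T then d i - t else 0) := by
        refine sum_le_sum fun i _ => ?_
        split_ifs with hi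
        · nlinarith [hc1 i, hhigh i hi]
        · nlinarith [hc0 i, hlow i hi]
    _ = t * ∑ i, c i + (∑ i ∈ T, d i - #T * t) := by
        rw [sum_add_distrib, sum_ite_mem, univ_inter, sum_sub_distrib, sum_const, nsmul_eq_mul,
          ← sum_mul, mul_comm]
    _ ≤ ∑ i ∈ T, d i := by nlinarith

def indicesFrom (n s : ℕ) : Finset (Fin n) := {k | s ≤ (k : ℕ)}

@[simp]
theorem mem_indicesFrom {n s : ℕ} {k : Fin n} : k ∈ indicesFrom n s ↔ s ≤ (k : ℕ) := by
  simp [indicesFrom]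

theorem sum_indicesFrom_eq_add {M : Type*} [AddCommMonoid M] {n : ℕ} (i : Fin n) (f : Fin n → M) :
    ∑ k ∈ indicesFrom n i, f k = f i + ∑ k ∈ indicesFrom n (i + 1), f k := by
  have : indicesFrom n i = insert i (indicesFrom n (i + 1)) := by
    ext k
    simp only [mem_indicesFrom, mem_insert, Fin.ext_iff]
    omega
  rw [this, sum_insert (by simp)]

structure IsDoublySubstochastic {ι : Type*} [Fintype ι] (D : Matrix ι ι ℝ) : Prop where
  nonneg : ∀ i j, 0 ≤ D i j
  sum_row_le_one : ∀ i, ∑ j, D i j ≤ 1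
  sum_col_le_one : ∀ j, ∑ i, D i j ≤ 1

namespace IsDoublySubstochastic

variable {ι : Type*} [Fintype ι] {D E F : Matrix ι ι ℝ}

theorem of_le (hE : IsDoublySubstochastic E) (h0 : ∀ i j, 0 ≤ D i j) (h : ∀ i j, D i j ≤ E i j) :
    IsDoublySubstochastic D where
  nonneg := h0
  sum_row_le_one i := (sum_le_sum fun j _ => h i j).trans (hE.sum_row_le_one i)
  sum_col_le_one j := (sum_le_sum fun i _ => h i j).trans (hE.sum_col_le_one j)

theorem midpoint (hE : IsDoublySubstochastic E) (hF : IsDoublySubstochastic F) :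
    IsDoublySubstochastic (of fun i j => (E i j + F i j) / 2) where
  nonneg i j := by have := hE.nonneg i j; have := hF.nonneg i j; simp only [of_apply]; positivity
  sum_row_le_one i := by
    simp only [of_apply, ← sum_div, sum_add_distrib]
    linarith [hE.sum_row_le_one i, hF.sum_row_le_one i]
  sum_col_le_one j := by
    simp only [of_apply, ← sum_div, sum_add_distrib]
    linarith [hE.sum_col_le_one j, hF.sum_col_le_one j]

theorem sum_indicesFrom_mul_le {N : ℕ} {D : Matrix (Fin N) (Fin N) ℝ}
    (hD : IsDoublySubstochastic D) {d : Fin N → ℝ} (hd0 : ∀ l, 0 ≤ d l) (hd : Monotone d) (s : ℕ) :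
    ∑ k ∈ indicesFrom N s, ∑ l, D k l * d l ≤ ∑ l ∈ indicesFrom N s, d l := by
  rw [sum_comm]
  simp_rw [← sum_mul]
  have hcard : ∑ l, ∑ k ∈ indicesFrom N s, D k l ≤ #(indicesFrom N s) := by
    rw [sum_comm, card_eq_sum_ones, Nat.cast_sum, Nat.cast_one]
    exact sum_le_sum fun k _ => hD.sum_row_le_one k
  have hc0 l : 0 ≤ ∑ k ∈ indicesFrom N s, D k l := sum_nonneg fun k _ => hD.nonneg k l
  have hc1 l : ∑ k ∈ indicesFrom N s, D k l ≤ 1 :=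
    (sum_le_sum_of_subset_of_nonneg (subset_univ _) fun k _ _ => hD.nonneg k l).trans
      (hD.sum_col_le_one l)
  by_cases hs : s < N
  · refine sum_mul_le_sum_of_threshold _ (hd0 ⟨s, hs⟩) hc0 hc1 hcard ?_ ?_
    · intro l hl
      have : (l : ℕ) < s := by simpa using hl
      exact hd (Fin.le_def.2 this.le)
    · intro l hl
      exact hd (Fin.le_def.2 (by simpa using hl))
  · have hempty : indicesFrom N s = ∅ :=
      eq_empty_of_forall_notMem fun l hl => hs ((mem_indicesFrom.1 hl).trans_lt l.2)
    refine sum_mul_le_sum_of_threshold _ (t := ∑ l, d l) (sum_nonneg fun l _ => hd0 l)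
      hc0 hc1 hcard ?_ ?_
    · exact fun l _ => single_le_sum (fun l _ => hd0 l) (mem_univ l)
    · simp [hempty]

end IsDoublySubstochastic

section Unitary

variable {𝕜 κ ι : Type*} [RCLike 𝕜] [Fintype κ] [DecidableEq κ] [Fintype ι]

theorem sum_norm_sq_row_of_mem_unitaryGroup {U : Matrix κ κ 𝕜} (hU : U ∈ unitaryGroup κ 𝕜)
    (i : κ) : ∑ j, ‖U i j‖ ^ 2 = 1 := by
  have h : (U * star U) i i = (1 : Matrix κ κ 𝕜) i i := by rw [Unitary.mul_star_self_of_mem hU]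
  simp only [mul_apply, star_apply, one_apply_eq, RCLike.star_def, RCLike.mul_conj] at h
  exact_mod_cast h

theorem sum_norm_sq_col_of_mem_unitaryGroup {U : Matrix κ κ 𝕜} (hU : U ∈ unitaryGroup κ 𝕜)
    (j : κ) : ∑ i, ‖U i j‖ ^ 2 = 1 := by
  simpa only [star_apply, norm_star] using
    sum_norm_sq_row_of_mem_unitaryGroup (Unitary.star_mem hU) j

theorem isDoublySubstochastic_norm_sq_submatrix {U : Matrix κ κ 𝕜} (hU : U ∈ unitaryGroup κ 𝕜)
    (e : ι ↪ κ) : IsDoublySubstochastic (of fun i j => ‖U (e i) (e j)‖ ^ 2) := by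
  have sum_le (f : κ → ℝ) (hf : ∀ k, 0 ≤ f k) : ∑ i, f (e i) ≤ ∑ k, f k := by
    rw [← sum_map univ e]
    exact sum_le_sum_of_subset_of_nonneg (subset_univ _) fun k _ _ => hf k
  exact ⟨fun i j => sq_nonneg _,
    fun i => (sum_le (fun k => ‖U (e i) k‖ ^ 2) fun _ => sq_nonneg _).trans_eq
      (sum_norm_sq_row_of_mem_unitaryGroup hU _),
    fun j => (sum_le (fun k => ‖U k (e j)‖ ^ 2) fun _ => sq_nonneg _).trans_eq
      (sum_norm_sq_col_of_mem_unitaryGroup hU _)⟩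

end Unitary

theorem mul_nonsing_inv_mem_unitaryGroup {n 𝕜 : Type*} [Fintype n] [DecidableEq n] [RCLike 𝕜]
    {R S : Matrix n n 𝕜} (hS : S.IsHermitian) (hSdet : IsUnit S.det) (h : Rᴴ * R = S * S) :
    R * S⁻¹ ∈ unitaryGroup n 𝕜 := by
  rw [mem_unitaryGroup_iff', star_eq_conjTranspose, conjTranspose_mul, conjTranspose_nonsing_inv,
    hS.eq]
  calc S⁻¹ * Rᴴ * (R * S⁻¹) = S⁻¹ * (Rᴴ * R) * S⁻¹ := by simp only [Matrix.mul_assoc]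
    _ = (S⁻¹ * S) * (S * S⁻¹) := by rw [h]; simp only [Matrix.mul_assoc]
    _ = 1 := by rw [nonsing_inv_mul S hSdet, mul_nonsing_inv S hSdet, Matrix.one_mul]

theorem trace_conjTranspose_mul_mul_mul_inv {m n 𝕜 : Type*} [Fintype m] [Fintype n] [DecidableEq n]
    [Field 𝕜] [StarRing 𝕜] (C : Matrix m n 𝕜) {R : Matrix n n 𝕜} (hR : IsUnit R.det)
    (G : Matrix m m 𝕜) :
    trace ((C * R)ᴴ * G * (C * R) * (Rᴴ * R)⁻¹) = trace (Cᴴ * G * C) := by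
  have hRH : IsUnit Rᴴ.det := by rw [det_conjTranspose]; exact hR.star
  have : (C * R)ᴴ * G * (C * R) * (Rᴴ * R)⁻¹ = Rᴴ * (Cᴴ * G * C) * Rᴴ⁻¹ := by
    rw [Matrix.mul_inv_rev, conjTranspose_mul]
    simp only [Matrix.mul_assoc, mul_nonsing_inv_cancel_left R _ hR]
  rw [this, trace_mul_cycle, ← Matrix.mul_assoc, nonsing_inv_mul _ hRH, Matrix.one_mul]

section Gsvd

variable {p n : ℕ}

def bottomEmb (hnp : n ≤ p) : Fin n ↪ Fin p :=
  ⟨fun l => ⟨p - n + l, by omega⟩, fun a b h => Fin.ext (by simpa using congrArg Fin.val h)⟩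

theorem bottomEmb_val (hnp : n ≤ p) (l : Fin n) : (bottomEmb hnp l : ℕ) = p - n + l := rfl

theorem eq_bottomEmb_iff (hnp : n ≤ p) {k : Fin p} {l : Fin n} :
    k = bottomEmb hnp l ↔ (k : ℕ) + n = p + l := by
  rw [Fin.ext_iff, bottomEmb_val]
  omega

theorem filter_univ_eq_map_bottomEmb (hnp : n ≤ p) (s : ℕ) :
    ({k : Fin p | p + s ≤ (k : ℕ) + n} : Finset (Fin p))
      = (indicesFrom n s).map (bottomEmb hnp) := by
  ext k
  simp only [mem_filter, mem_univ, true_and, mem_map, mem_indicesFrom, eq_comm (b := k),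
    eq_bottomEmb_iff hnp]
  constructor
  · intro hk
    exact ⟨⟨k + n - p, by omega⟩, by simp; omega, by simp; omega⟩
  · rintro ⟨l, hl, hkl⟩
    omega

-- `Σ_B` of the GSVD, and the paper's `P_{s+1}` and `ℋ_{s+1}` (indices are 0-based here)
def sigmaB (p : ℕ) (β : Fin n → ℝ) : Matrix (Fin p) (Fin n) ℂ :=
  of fun k l => if (k : ℕ) + n = p + l then (β l : ℂ) else 0

def bottomProj (p n s : ℕ) : Matrix (Fin p) (Fin p) ℂ :=
  diagonal fun k => if p + s ≤ (k : ℕ) + n then 1 else 0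

def bottomSel (n p s : ℕ) : Matrix (Fin n) (Fin p) ℂ :=
  of fun k l => if (l : ℕ) + n = p + k ∧ s ≤ (k : ℕ) then 1 else 0

variable (hnp : n ≤ p) (β : Fin n → ℝ)
include hnp

theorem sigmaB_apply (k : Fin p) (l : Fin n) :
    sigmaB p β k l = if k = bottomEmb hnp l then (β l : ℂ) else 0 := by
  simp only [sigmaB, of_apply, eq_bottomEmb_iff hnp]

theorem mul_sigmaB_apply {q : Type*} [Fintype q] (X : Matrix q (Fin p) ℂ) (a : q) (l : Fin n) :
    (X * sigmaB p β) a l = X a (bottomEmb hnp l) * β l := by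
  simp [mul_apply, sigmaB_apply hnp]

theorem conjTranspose_sigmaB_mul_apply {q : Type*} [Fintype q] (Y : Matrix (Fin p) q ℂ) (l : Fin n)
    (b : q) : ((sigmaB p β)ᴴ * Y) l b = β l * Y (bottomEmb hnp l) b := by
  simp [mul_apply, sigmaB_apply hnp, apply_ite (star : ℂ → ℂ)]

theorem conjTranspose_sigmaB_mul_self :
    (sigmaB p β)ᴴ * sigmaB p β = diagonal fun l => ((β l ^ 2 : ℝ) : ℂ) := by
  ext l l'
  rw [conjTranspose_sigmaB_mul_apply hnp, sigmaB_apply hnp, diagonal_apply]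
  simp only [(bottomEmb hnp).injective.eq_iff]
  split_ifs with h
  · subst h; push_cast; ring
  · simp

theorem trace_conjTranspose_sigmaB_mul_mul (G : Matrix (Fin p) (Fin p) ℂ) :
    trace ((sigmaB p β)ᴴ * G * sigmaB p β)
      = ∑ l, ((β l ^ 2 : ℝ) : ℂ) * G (bottomEmb hnp l) (bottomEmb hnp l) := by
  refine sum_congr rfl fun l _ => ?_
  rw [diag_apply, mul_sigmaB_apply hnp, conjTranspose_sigmaB_mul_apply hnp]
  push_cast
  ring

theorem trace_mul_bottomSel (s : ℕ) (Y : Matrix (Fin p) (Fin n) ℂ) :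
    trace (Y * bottomSel n p s) = ∑ k ∈ indicesFrom n s, Y (bottomEmb hnp k) k := by
  simp only [Matrix.trace, Matrix.diag, mul_apply, bottomSel, of_apply, ← eq_bottomEmb_iff hnp,
    mul_ite, mul_one, mul_zero]
  rw [sum_comm]
  simp [ite_and, sum_filter, indicesFrom]

theorem conjTranspose_mul_bottomProj_mul_self_apply (s : ℕ) (U : Matrix (Fin p) (Fin p) ℂ)
    (a : Fin p) :
    (Uᴴ * bottomProj p n s * U) a a
      = ∑ k ∈ indicesFrom n s, (‖U (bottomEmb hnp k) a‖ : ℂ) ^ 2 := by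
  rw [← sum_map (indicesFrom n s) (bottomEmb hnp) fun k => (‖U k a‖ : ℂ) ^ 2,
    ← filter_univ_eq_map_bottomEmb hnp, sum_filter, mul_apply]
  refine sum_congr rfl fun k _ => ?_
  rw [bottomProj, mul_diagonal, conjTranspose_apply, RCLike.star_def]
  split_ifs <;> simp [RCLike.conj_mul]

theorem trace_mul_sigmaB_mul_bottomSel (s : ℕ) (U₁ : Matrix (Fin p) (Fin p) ℂ)
    (U₂ : Matrix (Fin n) (Fin n) ℂ) :
    trace (U₁ * sigmaB p β * U₂ * bottomSel n p s)
      = ∑ k ∈ indicesFrom n s, ∑ l, U₁ (bottomEmb hnp k) (bottomEmb hnp l) * β l * U₂ l k := by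
  simp only [trace_mul_bottomSel hnp, mul_apply (M := U₁ * sigmaB p β), mul_sigmaB_apply hnp]

end Gsvd

section Formulations

variable {m p n : ℕ} (hnp : n ≤ p) {β : Fin n → ℝ}
  {A : Matrix (Fin m) (Fin n) ℂ} {B : Matrix (Fin p) (Fin n) ℂ} {V : Matrix (Fin p) (Fin p) ℂ}
  {R : Matrix (Fin n) (Fin n) ℂ}

include hnp

theorem gram_eq_of_gsvd (hV : V ∈ unitaryGroup (Fin p) ℂ) (hB : B = V * sigmaB p β * R)
    (hAA : Aᴴ * A = Rᴴ * diagonal (fun l => ((1 - β l ^ 2 : ℝ) : ℂ)) * R) :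
    Aᴴ * A + Bᴴ * B = Rᴴ * R := by
  have hBB : Bᴴ * B = Rᴴ * diagonal (fun l => ((β l ^ 2 : ℝ) : ℂ)) * R := by
    have hVV : Vᴴ * V = 1 := by
      rw [← star_eq_conjTranspose]; exact Unitary.star_mul_self_of_mem hV
    rw [hB, ← conjTranspose_sigmaB_mul_self hnp β]
    simp only [conjTranspose_mul, Matrix.mul_assoc, ← Matrix.mul_assoc Vᴴ, hVV, Matrix.one_mul]
  rw [hAA, hBB, ← Matrix.add_mul, ← Matrix.mul_add, diagonal_add]
  simp

theorem re_trace_bottomProj_eq (hR : IsUnit R.det) (hB : B = V * sigmaB p β * R) (s : ℕ)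
    (Φ : Matrix (Fin p) (Fin p) ℂ) :
    (trace (Bᴴ * Φᴴ * bottomProj p n s * Φ * B * (Rᴴ * R)⁻¹)).re
      = ∑ k ∈ indicesFrom n s,
          ∑ l, ‖(Φ * V) (bottomEmb hnp k) (bottomEmb hnp l)‖ ^ 2 * β l ^ 2 := by
  have hsandwich : Bᴴ * Φᴴ * bottomProj p n s * Φ * B * (Rᴴ * R)⁻¹
      = (V * sigmaB p β * R)ᴴ * (Φᴴ * bottomProj p n s * Φ) * (V * sigmaB p β * R) *
          (Rᴴ * R)⁻¹ := by
    rw [hB]; simp only [Matrix.mul_assoc]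
  have hcycle : (V * sigmaB p β)ᴴ * (Φᴴ * bottomProj p n s * Φ) * (V * sigmaB p β)
      = (sigmaB p β)ᴴ * ((Φ * V)ᴴ * bottomProj p n s * (Φ * V)) * sigmaB p β := by
    simp only [conjTranspose_mul, Matrix.mul_assoc]
  rw [hsandwich, trace_conjTranspose_mul_mul_mul_inv _ hR, hcycle,
    trace_conjTranspose_sigmaB_mul_mul hnp]
  simp only [conjTranspose_mul_bottomProj_mul_self_apply hnp, mul_sum, sum_comm (s := univ)]
  norm_cast
  exact sum_congr rfl fun k _ => sum_congr rfl fun l _ => mul_comm _ _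

theorem iSup_re_trace_bottomProj (hβ0 : ∀ l, 0 ≤ β l) (hmono : Monotone β)
    (hV : V ∈ unitaryGroup (Fin p) ℂ) (hR : IsUnit R.det) (hB : B = V * sigmaB p β * R) (s : ℕ) :
    ⨆ Φ : unitaryGroup (Fin p) ℂ,
      (trace (Bᴴ * (Φ : Matrix (Fin p) (Fin p) ℂ)ᴴ * bottomProj p n s *
        (Φ : Matrix (Fin p) (Fin p) ℂ) * B * (Rᴴ * R)⁻¹)).re
      = ∑ l ∈ indicesFrom n s, β l ^ 2 := by
  refine ciSup_eq_of_forall_le_of_eq (fun Φ => ?_) ⟨star V, Unitary.star_mem hV⟩ ?_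
  · rw [re_trace_bottomProj_eq hnp hR hB]
    have hD := isDoublySubstochastic_norm_sq_submatrix (mul_mem Φ.2 hV) (bottomEmb hnp)
    exact hD.sum_indicesFrom_mul_le (fun l => sq_nonneg _)
      (fun a b h => pow_le_pow_left₀ (hβ0 a) (hmono h) 2) s
  · rw [re_trace_bottomProj_eq hnp hR hB, Unitary.star_mul_self_of_mem hV]
    simp [one_apply, (bottomEmb hnp).injective.eq_iff, apply_ite norm, ite_pow, ite_mul]

theorem norm_trace_mul_sigmaB_mul_bottomSel_le (hβ0 : ∀ l, 0 ≤ β l) (hmono : Monotone β)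
    {U₁ : Matrix (Fin p) (Fin p) ℂ} {U₂ : Matrix (Fin n) (Fin n) ℂ}
    (hU₁ : U₁ ∈ unitaryGroup (Fin p) ℂ) (hU₂ : U₂ ∈ unitaryGroup (Fin n) ℂ) (s : ℕ) :
    ‖trace (U₁ * sigmaB p β * U₂ * bottomSel n p s)‖ ≤ ∑ l ∈ indicesFrom n s, β l := by
  set D : Matrix (Fin n) (Fin n) ℝ :=
    of fun k l => ‖U₁ (bottomEmb hnp k) (bottomEmb hnp l)‖ * ‖U₂ l k‖
  have hD : IsDoublySubstochastic D :=
    ((isDoublySubstochastic_norm_sq_submatrix hU₁ (bottomEmb hnp)).midpoint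
      (isDoublySubstochastic_norm_sq_submatrix (Unitary.star_mem hU₂) (.refl _))).of_le
      (fun k l => mul_nonneg (norm_nonneg _) (norm_nonneg _)) fun k l => by
        simp only [D, of_apply, Function.Embedding.refl_apply, star_apply, norm_star]
        nlinarith [two_mul_le_add_sq ‖U₁ (bottomEmb hnp k) (bottomEmb hnp l)‖ ‖U₂ l k‖]
  calc ‖trace (U₁ * sigmaB p β * U₂ * bottomSel n p s)‖
      ≤ ∑ k ∈ indicesFrom n s, ∑ l, D k l * β l := by
        rw [trace_mul_sigmaB_mul_bottomSel hnp]
        refine (norm_sum_le _ _).trans (sum_le_sum fun k _ => (norm_sum_le _ _).trans_eq ?_)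
        refine sum_congr rfl fun l _ => ?_
        simp only [D, of_apply, norm_mul, Complex.norm_real, Real.norm_of_nonneg (hβ0 l)]
        ring
    _ ≤ ∑ l ∈ indicesFrom n s, β l := hD.sum_indicesFrom_mul_le hβ0 hmono s

theorem iSup_norm_trace_bottomSel (hβ0 : ∀ l, 0 ≤ β l) (hmono : Monotone β)
    (hV : V ∈ unitaryGroup (Fin p) ℂ) (hB : B = V * sigmaB p β * R) {S : Matrix (Fin n) (Fin n) ℂ}
    (hS : S.IsHermitian) (hSdet : IsUnit S.det) (hRS : Rᴴ * R = S * S) (s : ℕ) :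
    ⨆ X₁ : unitaryGroup (Fin p) ℂ, ⨆ X₂ : unitaryGroup (Fin n) ℂ,
      ‖trace ((X₁ : Matrix (Fin p) (Fin p) ℂ) * B * S⁻¹ * (X₂ : Matrix (Fin n) (Fin n) ℂ) *
        bottomSel n p s)‖
      = ∑ l ∈ indicesFrom n s, β l := by
  have hW : R * S⁻¹ ∈ unitaryGroup (Fin n) ℂ := mul_nonsing_inv_mem_unitaryGroup hS hSdet hRS
  have hfactor (X₁ : Matrix (Fin p) (Fin p) ℂ) (X₂ : Matrix (Fin n) (Fin n) ℂ) :
      X₁ * B * S⁻¹ * X₂ = X₁ * V * sigmaB p β * (R * S⁻¹ * X₂) := by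
    rw [hB]; simp only [Matrix.mul_assoc]
  have hle (X₁ : unitaryGroup (Fin p) ℂ) (X₂ : unitaryGroup (Fin n) ℂ) :
      ‖trace ((X₁ : Matrix (Fin p) (Fin p) ℂ) * B * S⁻¹ * (X₂ : Matrix (Fin n) (Fin n) ℂ) *
        bottomSel n p s)‖ ≤ ∑ l ∈ indicesFrom n s, β l := by
    rw [hfactor]
    exact norm_trace_mul_sigmaB_mul_bottomSel_le hnp hβ0 hmono (mul_mem X₁.2 hV) (mul_mem hW X₂.2) s
  refine ciSup_eq_of_forall_le_of_eq (fun X₁ => ciSup_le (hle X₁)) ⟨star V, Unitary.star_mem hV⟩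
    (ciSup_eq_of_forall_le_of_eq (hle _) ⟨star (R * S⁻¹), Unitary.star_mem hW⟩ ?_)
  rw [hfactor, Unitary.star_mul_self_of_mem hV, Unitary.mul_star_self_of_mem hW,
    trace_mul_sigmaB_mul_bottomSel hnp]
  simp only [one_apply, (bottomEmb hnp).injective.eq_iff, ite_mul, one_mul, zero_mul, mul_ite,
    mul_one, mul_zero, sum_ite_eq', mem_univ, ↓reduceIte]
  rw [← Complex.ofReal_sum, Complex.norm_of_nonneg (sum_nonneg fun l _ => hβ0 l)]

end Formulations

theorem stmt18_general
    {m p n : ℕ} (hnp : n ≤ p)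
    (A : Matrix (Fin m) (Fin n) ℂ) (B : Matrix (Fin p) (Fin n) ℂ)
    (V : Matrix (Fin p) (Fin p) ℂ) (hV : V ∈ Matrix.unitaryGroup (Fin p) ℂ)
    (R : Matrix (Fin n) (Fin n) ℂ) (hR : IsUnit R.det)
    (β : Fin n → ℝ)
    (hβ0 : ∀ k, 0 ≤ β k) (hmono : Monotone β)
    (hB : B = V * (Matrix.of fun (k : Fin p) (l : Fin n) =>
        if (k : ℕ) + n = p + (l : ℕ) then Complex.ofReal (β l) else 0) * R)
    (hAA : Aᴴ * A = Rᴴ * Matrix.diagonal (fun l => Complex.ofReal (1 - β l ^ 2)) * R)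
    (S : Matrix (Fin n) (Fin n) ℂ) (hS : S.PosDef)
    (hSsq : S * S = Aᴴ * A + Bᴴ * B)
    (i : Fin n) :
    (β i ^ 2 =
(⨆ Φ : Matrix.unitaryGroup (Fin p) ℂ,
      (Matrix.trace (Bᴴ * (Φ : Matrix (Fin p) (Fin p) ℂ)ᴴ *
        Matrix.diagonal (fun k : Fin p => if p + (i : ℕ) ≤ (k : ℕ) + n then (1 : ℂ) else 0) *
        (Φ : Matrix (Fin p) (Fin p) ℂ) * B * (Aᴴ * A + Bᴴ * B)⁻¹)).re) -
(⨆ Φ : Matrix.unitaryGroup (Fin p) ℂ,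
      (Matrix.trace (Bᴴ * (Φ : Matrix (Fin p) (Fin p) ℂ)ᴴ *
        Matrix.diagonal (fun k : Fin p => if p + (i : ℕ) + 1 ≤ (k : ℕ) + n then (1 : ℂ) else 0) *
        (Φ : Matrix (Fin p) (Fin p) ℂ) * B * (Aᴴ * A + Bᴴ * B)⁻¹)).re)) ∧
    (β i =
(⨆ X1 : Matrix.unitaryGroup (Fin p) ℂ, ⨆ X2 : Matrix.unitaryGroup (Fin n) ℂ,
      norm (Matrix.trace ((X1 : Matrix (Fin p) (Fin p) ℂ) * B * S⁻¹ *
        (X2 : Matrix (Fin n) (Fin n) ℂ) *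
        Matrix.of (fun (k : Fin n) (l : Fin p) =>
          if (l : ℕ) + n = p + (k : ℕ) ∧ (i : ℕ) ≤ (k : ℕ) then (1 : ℂ) else 0)))) -
(⨆ X1 : Matrix.unitaryGroup (Fin p) ℂ, ⨆ X2 : Matrix.unitaryGroup (Fin n) ℂ,
      norm (Matrix.trace ((X1 : Matrix (Fin p) (Fin p) ℂ) * B * S⁻¹ *
        (X2 : Matrix (Fin n) (Fin n) ℂ) *
        Matrix.of (fun (k : Fin n) (l : Fin p) =>
          if (l : ℕ) + n = p + (k : ℕ) ∧ (i : ℕ) + 1 ≤ (k : ℕ) then (1 : ℂ) else 0))))) := by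
  have hB' : B = V * sigmaB p β * R := hB
  have hgram : Aᴴ * A + Bᴴ * B = Rᴴ * R := gram_eq_of_gsvd hnp hV hB' hAA
  have hproj := iSup_re_trace_bottomProj hnp hβ0 hmono hV hR hB'
  have hsel := iSup_norm_trace_bottomSel hnp hβ0 hmono hV hB' hS.isHermitian
    ((isUnit_iff_isUnit_det S).mp hS.isUnit) (hgram.symm.trans hSsq.symm)
  simp only [bottomProj, bottomSel] at hproj hsel
  rw [hgram, Nat.add_assoc p, hproj, hproj, hsel, hsel, sum_indicesFrom_eq_add i,
    sum_indicesFrom_eq_add i]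
  constructor <;> ring

theorem stmt18
    {m p n : ℕ} (hnp : n ≤ p)
    (A : Matrix (Fin m) (Fin n) ℂ) (B : Matrix (Fin p) (Fin n) ℂ)
    (hrank : (Matrix.fromRows A B).rank = n)
    (V : Matrix (Fin p) (Fin p) ℂ) (hV : V ∈ Matrix.unitaryGroup (Fin p) ℂ)
    (R : Matrix (Fin n) (Fin n) ℂ) (hR : IsUnit R.det)
    (β : Fin n → ℝ)
    (hβ0 : ∀ k, 0 ≤ β k) (hβ1 : ∀ k, β k ≤ 1) (hmono : Monotone β)
    (hB : B = V * (Matrix.of fun (k : Fin p) (l : Fin n) =>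
        if (k : ℕ) + n = p + (l : ℕ) then Complex.ofReal (β l) else 0) * R)
    (hAA : Aᴴ * A = Rᴴ * Matrix.diagonal (fun l => Complex.ofReal (1 - β l ^ 2)) * R)
    (S : Matrix (Fin n) (Fin n) ℂ) (hS : S.PosDef)
    (hSsq : S * S = Aᴴ * A + Bᴴ * B)
    (i : Fin n) (hi : n / 2 ≤ (i : ℕ)) :
    (β i ^ 2 =
(⨆ Φ : Matrix.unitaryGroup (Fin p) ℂ,
      (Matrix.trace (Bᴴ * (Φ : Matrix (Fin p) (Fin p) ℂ)ᴴ *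
        Matrix.diagonal (fun k : Fin p => if p + (i : ℕ) ≤ (k : ℕ) + n then (1 : ℂ) else 0) *
        (Φ : Matrix (Fin p) (Fin p) ℂ) * B * (Aᴴ * A + Bᴴ * B)⁻¹)).re) -
(⨆ Φ : Matrix.unitaryGroup (Fin p) ℂ,
      (Matrix.trace (Bᴴ * (Φ : Matrix (Fin p) (Fin p) ℂ)ᴴ *
        Matrix.diagonal (fun k : Fin p => if p + (i : ℕ) + 1 ≤ (k : ℕ) + n then (1 : ℂ) else 0) *
        (Φ : Matrix (Fin p) (Fin p) ℂ) * B * (Aᴴ * A + Bᴴ * B)⁻¹)).re)) ∧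
    (β i =
(⨆ X1 : Matrix.unitaryGroup (Fin p) ℂ, ⨆ X2 : Matrix.unitaryGroup (Fin n) ℂ,
      norm (Matrix.trace ((X1 : Matrix (Fin p) (Fin p) ℂ) * B * S⁻¹ *
        (X2 : Matrix (Fin n) (Fin n) ℂ) *
        Matrix.of (fun (k : Fin n) (l : Fin p) =>
          if (l : ℕ) + n = p + (k : ℕ) ∧ (i : ℕ) ≤ (k : ℕ) then (1 : ℂ) else 0)))) -
(⨆ X1 : Matrix.unitaryGroup (Fin p) ℂ, ⨆ X2 : Matrix.unitaryGroup (Fin n) ℂ,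
      norm (Matrix.trace ((X1 : Matrix (Fin p) (Fin p) ℂ) * B * S⁻¹ *
        (X2 : Matrix (Fin n) (Fin n) ℂ) *
        Matrix.of (fun (k : Fin n) (l : Fin p) =>
          if (l : ℕ) + n = p + (k : ℕ) ∧ (i : ℕ) + 1 ≤ (k : ℕ) then (1 : ℂ) else 0))))) :=
  stmt18_general hnp A B V hV R hR β hβ0 hmono hB hAA S hS hSsq i
end
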